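/- Let 𝒜 = ℂ[E₁,E₂,A₀,A₁] with the derivations e, f, h as above, δ = 4E₂ − E₁² and v = A₀ − (1/2)E₁A₁. Then for all natural numbers j, m, n, the element δʲ·A₁^m·v^n is a highest weight vector: e(δʲA₁^m v^n) = 0, h(δʲA₁^m v^n) = (m − n − 4j)·δʲA₁^m v^n, and f(δʲA₁^m v^n) = (2j + (n−m)/2)·E₁·δʲA₁^m v^n. -/
import Mathlib

open MvPolynomial

private lemma der_pow {D : Derivation ℂ (MvPolynomial (Fin 4) ℂ) (MvPolynomial (Fin 4) ℂ)}
    {a w : MvPolynomial (Fin 4) ℂ} {c : ℂ} (ha : D a = c • (w * a)) (k : ℕ) :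
    D (a ^ k) = ((k : ℂ) * c) • (w * a ^ k) := by
  induction k with
  | zero => simp
  | succ k ih =>
    rw [pow_succ, Derivation.leibniz, ih, ha]
    simp only [smul_eq_C_mul, smul_eq_mul, map_mul, map_natCast]
    push_cast
    ring

private lemma der_triple {D : Derivation ℂ (MvPolynomial (Fin 4) ℂ) (MvPolynomial (Fin 4) ℂ)}
    {a b c w : MvPolynomial (Fin 4) ℂ} {ca cb cc : ℂ}
    (ha : D a = ca • (w * a)) (hb : D b = cb • (w * b)) (hc : D c = cc • (w * c))
    (j m n : ℕ) :
    D (a ^ j * b ^ m * c ^ n) =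
      ((j : ℂ) * ca + m * cb + n * cc) • (w * (a ^ j * b ^ m * c ^ n)) := by
  rw [Derivation.leibniz, Derivation.leibniz, der_pow ha, der_pow hb, der_pow hc]
  simp only [smul_eq_C_mul, smul_eq_mul, map_add, map_mul, map_natCast]
  ring

private lemma der_C (D : Derivation ℂ (MvPolynomial (Fin 4) ℂ) (MvPolynomial (Fin 4) ℂ))
    (c : ℂ) : D (C c) = 0 := by
  rw [show (C c : MvPolynomial (Fin 4) ℂ) = algebraMap ℂ _ c from rfl]
  exact D.map_algebraMap c

private lemma der_four (D : Derivation ℂ (MvPolynomial (Fin 4) ℂ) (MvPolynomial (Fin 4) ℂ)) :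
    D 4 = 0 := by
  rw [show (4 : MvPolynomial (Fin 4) ℂ) = C (4 : ℂ) from (map_ofNat C 4).symm]
  exact der_C D 4

/-- In `𝒜 = ℂ[E₁,E₂,A₀,A₁]` with the derivations `e, f, h` as in the
skein lasagna module of `B² × S²`, `δ = 4E₂ - E₁²` and `v = A₀ - (1/2)E₁A₁`,
for all `j, m, n : ℕ` the element `δʲ A₁^m v^n` is a highest weight vector:
`e(δʲA₁^m vⁿ) = 0`, `h(δʲA₁^m vⁿ) = (m - n - 4j)·δʲA₁^m vⁿ`,
`f(δʲA₁^m vⁿ) = (2j + (n-m)/2)·E₁·δʲA₁^m vⁿ`.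
Here `E₁ = X 0`, `E₂ = X 1`, `A₀ = X 2`, `A₁ = X 3`. -/
theorem highest_weight_vectors_delta_A1_v
    (e f h : Derivation ℂ (MvPolynomial (Fin 4) ℂ) (MvPolynomial (Fin 4) ℂ))
    (he1 : e (X 0) = -2) (he2 : e (X 1) = -X 0)
    (he3 : e (X 2) = -X 3) (he4 : e (X 3) = 0)
    (hf1 : f (X 0) = X 0 ^ 2 - 2 * X 1) (hf2 : f (X 1) = X 0 * X 1)
    (hf3 : f (X 2) = (1 / 2 : ℂ) • (X 0 * X 2) - X 1 * X 3)
    (hf4 : f (X 3) = -((1 / 2 : ℂ) • (X 0 * X 3)))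
    (hh1 : h (X 0) = -2 * X 0) (hh2 : h (X 1) = -4 * X 1)
    (hh3 : h (X 2) = -X 2) (hh4 : h (X 3) = X 3)
    (δ v : MvPolynomial (Fin 4) ℂ)
    (hδ : δ = 4 * X 1 - X 0 ^ 2) (hv : v = X 2 - (1 / 2 : ℂ) • (X 0 * X 3))
    (j m n : ℕ) :
    e (δ ^ j * X 3 ^ m * v ^ n) = 0 ∧
    h (δ ^ j * X 3 ^ m * v ^ n) =
      ((m : ℂ) - n - 4 * j) • (δ ^ j * X 3 ^ m * v ^ n) ∧
    f (δ ^ j * X 3 ^ m * v ^ n) =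
      ((2 * j : ℂ) + ((n : ℂ) - m) / 2) • (X 0 * (δ ^ j * X 3 ^ m * v ^ n)) := by
  have hhalf : (2 : MvPolynomial (Fin 4) ℂ) * C (1/2 : ℂ) = 1 := by
    rw [show (2 : MvPolynomial (Fin 4) ℂ) = C (2 : ℂ) from (map_ofNat C 2).symm, ← map_mul]
    norm_num
  have heδ : e δ = (0 : ℂ) • ((1 : MvPolynomial (Fin 4) ℂ) * δ) := by
    rw [hδ]
    simp only [map_sub, Derivation.leibniz, der_four e, he1, he2, pow_two,
      smul_eq_C_mul, smul_eq_mul, map_zero, map_neg, map_ofNat, one_mul]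
    ring
  have heA : e (X 3 : MvPolynomial (Fin 4) ℂ) = (0 : ℂ) • ((1 : MvPolynomial (Fin 4) ℂ) * X 3) := by
    rw [he4]; simp
  have hev : e v = (0 : ℂ) • ((1 : MvPolynomial (Fin 4) ℂ) * v) := by
    rw [hv]
    simp only [map_sub, map_smul, Derivation.leibniz, der_C e, he1, he3, he4,
      smul_eq_C_mul, smul_eq_mul, map_zero, map_neg, map_ofNat, one_mul]
    linear_combination (norm := ring) (X 3 : MvPolynomial (Fin 4) ℂ) * hhalf
  have hhδ : h δ = (-4 : ℂ) • ((1 : MvPolynomial (Fin 4) ℂ) * δ) := by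
    rw [hδ]
    simp only [map_sub, Derivation.leibniz, der_four h, hh1, hh2, pow_two,
      smul_eq_C_mul, smul_eq_mul, map_zero, map_neg, map_ofNat, one_mul]
    ring
  have hhA : h (X 3 : MvPolynomial (Fin 4) ℂ) = (1 : ℂ) • ((1 : MvPolynomial (Fin 4) ℂ) * X 3) := by
    rw [hh4]; simp
  have hhv : h v = (-1 : ℂ) • ((1 : MvPolynomial (Fin 4) ℂ) * v) := by
    rw [hv]
    simp only [map_sub, map_smul, Derivation.leibniz, der_C h, hh1, hh3, hh4,
      smul_eq_C_mul, smul_eq_mul, map_zero, map_neg, map_one, map_ofNat, one_mul]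
    ring
  have hfδ : f δ = (2 : ℂ) • (X 0 * δ) := by
    rw [hδ]
    simp only [map_sub, Derivation.leibniz, der_four f, hf1, hf2, pow_two,
      smul_eq_C_mul, smul_eq_mul, map_zero, map_neg, map_ofNat, one_mul]
    ring
  have hfA : f (X 3 : MvPolynomial (Fin 4) ℂ) = (-(1/2) : ℂ) • (X 0 * X 3) := by
    rw [hf4, ← neg_smul]
  have hfv : f v = ((1/2) : ℂ) • (X 0 * v) := by
    rw [hv]
    simp only [map_sub, map_smul, Derivation.leibniz, der_C f, hf1, hf3, hf4, pow_two,
      smul_eq_C_mul, smul_eq_mul, map_zero, map_neg, map_ofNat, one_mul]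
    linear_combination (norm := ring)
      (X 1 * X 3 + C (1/2 : ℂ) * X 0 * X 0 * X 3 : MvPolynomial (Fin 4) ℂ) * hhalf
  refine ⟨?_, ?_, ?_⟩
  · rw [der_triple heδ heA hev]; simp
  · rw [der_triple hhδ hhA hhv, one_mul]
    congr 1
    push_cast; ring
  · rw [der_triple hfδ hfA hfv]
    congr 1
    push_cast; ring
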